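/- Let b = 5, let d ≥ 3 and 0 < σ < 1 satisfy 4b²σ/(1−σ²) ≤ 1/2, let 2 ≤ r ≤ b, and let I_1,…,I_r be distinct two-element subsets of [d]. Then the matrix M = I_d + ∑_{i=1}^r (Σ_{I_i,σ}^{−1} − I_d) is invertible, and its inverse Σ_{I_1,…,I_r} := M^{−1} satisfies: (a) Σ_{I_1,…,I_r} is symmetric and positive definite; (b) det(Σ_{I_1,…,I_r}) ≤ 2; (c) every entry of Σ_{I_1,…,I_r} has absolute value at most 2. -/

import Mathlib

open Finset Matrix

noncomputable section

def SigmaM (d : ℕ) (σ : ℝ) (I : Finset (Fin d)) : Matrix (Fin d) (Fin d) ℝ :=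
  Matrix.of fun a b => if a = b then 1 else if ({a, b} : Finset (Fin d)) = I then σ else 0

namespace Statement15Aux

lemma fpair_eq {α : Type*} [DecidableEq α] {a b i j : α} :
    ({a, b} : Finset α) = {i, j} ↔ (a = i ∧ b = j) ∨ (a = j ∧ b = i) := by
  rw [← Finset.coe_inj]
  simp only [Finset.coe_insert, Finset.coe_singleton]
  exact Set.pair_eq_pair_iff

/-- `Σ_{I,σ}⁻¹ - 1`, explicitly. -/
def DI (d : ℕ) (σ : ℝ) (I : Finset (Fin d)) : Matrix (Fin d) (Fin d) ℝ :=
  Matrix.of fun a b => if a = b then (if a ∈ I then σ^2/(1-σ^2) else 0)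
    else if ({a, b} : Finset (Fin d)) = I then -σ/(1-σ^2) else 0

lemma sigma_inv {d : ℕ} {σ : ℝ} (ht : (1:ℝ) - σ^2 ≠ 0) {I : Finset (Fin d)}
    (hI : I.card = 2) : (SigmaM d σ I)⁻¹ = 1 + DI d σ I := by
  obtain ⟨i, j, hij, rfl⟩ := Finset.card_eq_two.mp hI
  apply Matrix.inv_eq_right_inv
  ext a c
  rw [Matrix.mul_apply]
  have split : ∀ b : Fin d, SigmaM d σ {i,j} a b * (1 + DI d σ {i,j}) b c
      = (if b = c then SigmaM d σ {i,j} a b else 0) + SigmaM d σ {i,j} a b * DI d σ {i,j} b c := by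
    intro b
    rw [Matrix.add_apply, Matrix.one_apply, mul_add]
    congr 1
    split <;> simp
  rw [Finset.sum_congr rfl fun b _ => split b, Finset.sum_add_distrib,
    Finset.sum_ite_eq' Finset.univ c, if_pos (Finset.mem_univ c),
    ← Finset.sum_subset (Finset.subset_univ ({i,j} : Finset (Fin d)))
      (fun b _ hb => ?_), Finset.sum_pair hij]
  · -- main computation
    have hup : ∀ a b : Fin d, SigmaM d σ {i,j} a b
        = if a = b then 1 else if (a = i ∧ b = j) ∨ (a = j ∧ b = i) then σ else 0 := by
      intro a b; simp only [SigmaM, Matrix.of_apply, fpair_eq]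
    have hdp : ∀ a b : Fin d, DI d σ {i,j} a b
        = if a = b then (if a = i ∨ a = j then σ^2/(1-σ^2) else 0)
          else if (a = i ∧ b = j) ∨ (a = j ∧ b = i) then -σ/(1-σ^2) else 0 := by
      intro a b; simp only [DI, Matrix.of_apply, fpair_eq, Finset.mem_insert,
        Finset.mem_singleton]
    rw [hup, hdp, hdp, hup, hup, Matrix.one_apply]
    rcases eq_or_ne a i with hai | hai
    · subst hai
      rcases eq_or_ne c a with hca | hca
      · subst hca
        simp [hij, hij.symm] <;> field_simp <;> ring
      · rcases eq_or_ne c j with hcj | hcj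
        · subst hcj
          simp [hij, hij.symm, Ne.symm hca] <;> field_simp <;> ring
        · simp [hij, hij.symm, hca, hcj, Ne.symm hca, Ne.symm hcj]
    · rcases eq_or_ne a j with haj | haj
      · subst haj
        rcases eq_or_ne c i with hci | hci
        · subst hci
          simp [hij, hij.symm, hai, Ne.symm hai] <;> field_simp <;> ring
        · rcases eq_or_ne c a with hca | hca
          · subst hca
            simp [hij, hij.symm, hai, Ne.symm hai] <;> field_simp <;> ring
          · simp [hij, hij.symm, hai, hci, hca, Ne.symm hai, Ne.symm hci, Ne.symm hca]
      · rcases eq_or_ne a c with hac | hac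
        · subst hac
          simp [hai, haj, Ne.symm hai, Ne.symm haj]
        · simp [hai, haj, hac, Ne.symm hai, Ne.symm haj]
  · -- vanishing outside {i,j}
    have hbi : b ≠ i := fun h => hb (by simp [h])
    have hbj : b ≠ j := fun h => hb (by simp [h])
    have : DI d σ {i,j} b c = 0 := by
      simp only [DI, Matrix.of_apply, fpair_eq, Finset.mem_insert, Finset.mem_singleton]
      split
      · simp [hbi, hbj]
      · have : ¬ ((b = i ∧ c = j) ∨ (b = j ∧ c = i)) := by
          rintro (⟨rfl, _⟩ | ⟨rfl, _⟩) <;> simp at hbi hbj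
        simp [this]
    rw [this, mul_zero]

section Bounds

variable {d : ℕ} {σ : ℝ}

lemma DI_symm (I : Finset (Fin d)) (a b : Fin d) : DI d σ I a b = DI d σ I b a := by
  rcases eq_or_ne a b with rfl | hab
  · rfl
  · simp only [DI, Matrix.of_apply, if_neg hab, if_neg (Ne.symm hab), Finset.pair_comm a b]

lemma DI_abs_le (hσ0 : 0 < σ) (hσ1 : σ < 1) (I : Finset (Fin d)) (a b : Fin d) :
    |DI d σ I a b| ≤ σ / (1 - σ^2) := by
  have ht : 0 < 1 - σ^2 := by nlinarith
  have hs : 0 < σ / (1 - σ^2) := by positivity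
  simp only [DI, Matrix.of_apply]
  split
  · split
    · rw [abs_of_nonneg (by positivity)]
      gcongr
      nlinarith
    · simpa using hs.le
  · split
    · rw [neg_div, abs_neg, abs_of_nonneg hs.le]
    · simpa using hs.le

lemma DI_diag_nonneg (hσ0 : 0 < σ) (hσ1 : σ < 1) (I : Finset (Fin d)) (a : Fin d) :
    0 ≤ DI d σ I a a := by
  have ht : 0 < 1 - σ^2 := by nlinarith
  have h : DI d σ I a a = if a ∈ I then σ^2/(1-σ^2) else 0 := by simp [DI]
  rw [h]
  split
  · positivity
  · exact le_rfl

lemma DI_row_zero {I : Finset (Fin d)} {a : Fin d} (ha : a ∉ I) (b : Fin d) :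
    DI d σ I a b = 0 := by
  rcases eq_or_ne a b with rfl | hab
  · simp [DI, ha]
  · simp only [DI, Matrix.of_apply, if_neg hab]
    split
    · rename_i hp
      exact absurd (hp ▸ Finset.mem_insert_self a {b}) ha
    · rfl

lemma DI_col_zero {I : Finset (Fin d)} {b : Fin d} (hb : b ∉ I) (a : Fin d) :
    DI d σ I a b = 0 := by
  rw [DI_symm]; exact DI_row_zero hb a

lemma DI_rowsum (hσ0 : 0 < σ) (hσ1 : σ < 1) {I : Finset (Fin d)} (hI : I.card = 2)
    (a : Fin d) : ∑ b, |DI d σ I a b| ≤ 2 * (σ / (1 - σ^2)) := by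
  obtain ⟨i, j, hij, rfl⟩ := Finset.card_eq_two.mp hI
  rw [← Finset.sum_subset (Finset.subset_univ ({i, j} : Finset (Fin d)))
    (fun b _ hb => by rw [DI_col_zero hb, abs_zero]), Finset.sum_pair hij]
  have h1 := DI_abs_le hσ0 hσ1 ({i,j} : Finset (Fin d)) a i
  have h2 := DI_abs_le hσ0 hσ1 ({i,j} : Finset (Fin d)) a j
  linarith

lemma DI_totalsum (hσ0 : 0 < σ) (hσ1 : σ < 1) {I : Finset (Fin d)} (hI : I.card = 2) :
    ∑ a, ∑ b, |DI d σ I a b| ≤ 4 * (σ / (1 - σ^2)) := by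
  have key : ∀ a : Fin d, a ∉ I → ∑ b, |DI d σ I a b| = 0 := by
    intro a ha
    simp [DI_row_zero ha]
  rw [← Finset.sum_subset (Finset.subset_univ I) (fun a _ ha => key a ha)]
  calc ∑ a ∈ I, ∑ b, |DI d σ I a b| ≤ ∑ _a ∈ I, 2 * (σ / (1 - σ^2)) :=
        Finset.sum_le_sum fun a _ => DI_rowsum hσ0 hσ1 hI a
    _ = 4 * (σ / (1 - σ^2)) := by rw [Finset.sum_const, hI]; push_cast; ring

end Bounds

/-- pointwise exponential bound -/
lemma exp_quad_le {μ : ℝ} (h : -(1/2) ≤ μ) : Real.exp (μ - 2*μ^2) ≤ 1 + μ := by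
  have h1 : 0 < 1 + μ := by linarith
  have h2 : μ - 2*μ^2 ≤ μ / (1 + μ) := by
    rw [le_div_iff₀ h1]; nlinarith [sq_nonneg μ]
  have h3 : Real.exp (μ / (1 + μ)) ≤ 1 + μ := by
    have h4 := Real.add_one_le_exp (-(μ / (1 + μ)))
    have h5 : -(μ / (1 + μ)) + 1 = 1 / (1 + μ) := by field_simp; ring
    rw [h5] at h4
    have h6 : 1 ≤ (1 + μ) * Real.exp (-(μ / (1 + μ))) := by
      calc (1:ℝ) = (1 + μ) * (1 / (1 + μ)) := by field_simp
        _ ≤ _ := mul_le_mul_of_nonneg_left h4 h1.le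
    rw [Real.exp_neg, ← div_eq_mul_inv, one_le_div (Real.exp_pos _)] at h6
    exact h6
  exact (Real.exp_le_exp.mpr h2).trans h3

/-- trace and trace of square, given a unitary diagonalization -/
lemma trace_eqs {n : ℕ} {A U : Matrix (Fin n) (Fin n) ℝ} {lam : Fin n → ℝ}
    (hUU : star U * U = 1) (hspec : A = U * Matrix.diagonal lam * star U) :
    A.trace = ∑ k, lam k ∧ (A * A).trace = ∑ k, (lam k)^2 := by
  subst hspec
  constructor
  · rw [Matrix.trace_mul_cycle, hUU, Matrix.one_mul, Matrix.trace_diagonal]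
  · have h : (U * Matrix.diagonal lam * star U) * (U * Matrix.diagonal lam * star U)
        = U * (Matrix.diagonal lam * Matrix.diagonal lam) * star U := by
      rw [show (U * Matrix.diagonal lam * star U) * (U * Matrix.diagonal lam * star U)
          = U * Matrix.diagonal lam * (star U * U) * (Matrix.diagonal lam * star U) from by
        noncomm_ring, hUU, Matrix.mul_one]
      noncomm_ring
    rw [h, Matrix.trace_mul_cycle, hUU, Matrix.one_mul,
      Matrix.diagonal_mul_diagonal, Matrix.trace_diagonal]
    exact Finset.sum_congr rfl fun k _ => (sq (lam k)).symm

end Statement15Aux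

set_option maxHeartbeats 1600000 in
open Statement15Aux in
theorem statement15 (d : ℕ) (hd : 3 ≤ d) (σ : ℝ) (hσ0 : 0 < σ) (hσ1 : σ < 1)
    (hσb : 4 * 5^2 * σ / (1 - σ^2) ≤ 1/2)
    (r : ℕ) (hr2 : 2 ≤ r) (hrb : r ≤ 5)
    (I : Fin r → Finset (Fin d)) (hcard : ∀ i, (I i).card = 2)
    (hinj : Function.Injective I)
    (M : Matrix (Fin d) (Fin d) ℝ)
    (hM : M = 1 + ∑ i, ((SigmaM d σ (I i))⁻¹ - 1)) :
    IsUnit M ∧ (M⁻¹).IsSymm ∧ (M⁻¹).PosDef ∧ (M⁻¹).det ≤ 2 ∧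
    ∀ a b : Fin d, |M⁻¹ a b| ≤ 2 := by
  have ht : 0 < 1 - σ^2 := by nlinarith
  have hσ2 : (1:ℝ) - σ^2 ≠ 0 := ne_of_gt ht
  set s := σ / (1 - σ^2) with hs_def
  have hs0 : 0 < s := by positivity
  have hs : s ≤ 1/200 := by
    have h100 : 100 * s ≤ 1/2 := by
      calc 100 * s = 4 * 5^2 * σ / (1 - σ^2) := by rw [hs_def]; ring
        _ ≤ 1/2 := hσb
    linarith
  set E : Matrix (Fin d) (Fin d) ℝ := ∑ i, DI d σ (I i) with hE_def
  have hME : M = 1 + E := by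
    rw [hM, hE_def]
    congr 1
    refine Finset.sum_congr rfl fun i _ => ?_
    rw [sigma_inv hσ2 (hcard i)]
    simp
  have hEapp : ∀ a b, E a b = ∑ i, DI d σ (I i) a b := fun a b => by
    rw [hE_def]; exact Matrix.sum_apply a b Finset.univ fun i => DI d σ (I i)
  -- row sums
  have hErow : ∀ a, ∑ b, |E a b| ≤ 1/20 := by
    intro a
    calc ∑ b, |E a b| ≤ ∑ b, ∑ i, |DI d σ (I i) a b| := by
          refine Finset.sum_le_sum fun b _ => ?_
          rw [hEapp]; exact Finset.abs_sum_le_sum_abs _ _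
      _ = ∑ i, ∑ b, |DI d σ (I i) a b| := Finset.sum_comm
      _ ≤ ∑ _i : Fin r, 2 * s := Finset.sum_le_sum fun i _ => DI_rowsum hσ0 hσ1 (hcard i) a
      _ = (r : ℝ) * (2 * s) := by
          rw [Finset.sum_const, Finset.card_univ, Fintype.card_fin, nsmul_eq_mul]
      _ ≤ 5 * (2 * s) := by
          have h5 : (r:ℝ) ≤ 5 := by exact_mod_cast hrb
          nlinarith
      _ ≤ 1/20 := by linarith
  have hEentry : ∀ a b, |E a b| ≤ 5 * s := by
    intro a b
    calc |E a b| ≤ ∑ i, |DI d σ (I i) a b| := by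
          rw [hEapp]; exact Finset.abs_sum_le_sum_abs _ _
      _ ≤ ∑ _i : Fin r, s := Finset.sum_le_sum fun i _ => DI_abs_le hσ0 hσ1 _ a b
      _ = (r:ℝ) * s := by rw [Finset.sum_const, Finset.card_univ, Fintype.card_fin, nsmul_eq_mul]
      _ ≤ 5 * s := by
          have h5 : (r:ℝ) ≤ 5 := by exact_mod_cast hrb
          nlinarith
  have hEtotal : ∑ a, ∑ b, |E a b| ≤ 20 * s := by
    calc ∑ a, ∑ b, |E a b| ≤ ∑ a, ∑ b, ∑ i, |DI d σ (I i) a b| := by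
          refine Finset.sum_le_sum fun a _ => Finset.sum_le_sum fun b _ => ?_
          rw [hEapp]; exact Finset.abs_sum_le_sum_abs _ _
      _ = ∑ a, ∑ i, ∑ b, |DI d σ (I i) a b| :=
          Finset.sum_congr rfl fun a _ => Finset.sum_comm
      _ = ∑ i, ∑ a, ∑ b, |DI d σ (I i) a b| := Finset.sum_comm
      _ ≤ ∑ _i : Fin r, 4 * s := Finset.sum_le_sum fun i _ => DI_totalsum hσ0 hσ1 (hcard i)
      _ = (r:ℝ) * (4 * s) := by rw [Finset.sum_const, Finset.card_univ, Fintype.card_fin, nsmul_eq_mul]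
      _ ≤ 20 * s := by
          have h5 : (r:ℝ) ≤ 5 := by exact_mod_cast hrb
          nlinarith
  have hEsym : ∀ a b, E a b = E b a := by
    intro a b
    rw [hEapp, hEapp]
    exact Finset.sum_congr rfl fun i _ => DI_symm _ a b
  have hMsym : ∀ a b, M a b = M b a := by
    intro a b
    rw [hME]
    simp only [Matrix.add_apply]
    rw [hEsym a b]
    congr 1
    rcases eq_or_ne a b with rfl | h
    · rfl
    · rw [Matrix.one_apply_ne h, Matrix.one_apply_ne (Ne.symm h)]
  have hHM : M.IsHermitian := by
    show Mᴴ = M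
    ext a b
    rw [Matrix.conjTranspose_apply]
    simpa using hMsym b a
  -- quadratic bound
  have hquad : ∀ x : Fin d → ℝ, |∑ a, ∑ b, E a b * x a * x b| ≤ 1/20 * ∑ a, (x a)^2 := by
    intro x
    have rowbd : ∀ (y z : Fin d → ℝ), (∀ a, ∑ b, |E a b| ≤ 1/20) →
        ∑ a, ∑ b, |E a b| * (y a)^2 ≤ 1/20 * ∑ a, (y a)^2 := by
      intro y z h
      calc ∑ a, ∑ b, |E a b| * (y a)^2 = ∑ a, (y a)^2 * ∑ b, |E a b| := by
            refine Finset.sum_congr rfl fun a _ => ?_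
            rw [Finset.mul_sum]
            exact Finset.sum_congr rfl fun b _ => by ring
        _ ≤ ∑ a, (y a)^2 * (1/20) :=
            Finset.sum_le_sum fun a _ => mul_le_mul_of_nonneg_left (h a) (sq_nonneg _)
        _ = 1/20 * ∑ a, (y a)^2 := by rw [← Finset.sum_mul]; ring
    have step1 : |∑ a, ∑ b, E a b * x a * x b| ≤ ∑ a, ∑ b, |E a b| * ((x a)^2 + (x b)^2) / 2 := by
      refine (Finset.abs_sum_le_sum_abs _ _).trans (Finset.sum_le_sum fun a _ => ?_)
      refine (Finset.abs_sum_le_sum_abs _ _).trans (Finset.sum_le_sum fun b _ => ?_)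
      rw [abs_mul, abs_mul]
      have h1 : |x a| * |x b| ≤ ((x a)^2 + (x b)^2)/2 := by
        nlinarith [sq_nonneg (|x a| - |x b|), sq_abs (x a), sq_abs (x b)]
      have h2 : (0:ℝ) ≤ |E a b| := abs_nonneg _
      calc |E a b| * |x a| * |x b| = |E a b| * (|x a| * |x b|) := by ring
        _ ≤ |E a b| * (((x a)^2 + (x b)^2)/2) := mul_le_mul_of_nonneg_left h1 h2
        _ = |E a b| * ((x a)^2 + (x b)^2) / 2 := by ring
    have step2 : ∑ a, ∑ b, |E a b| * ((x a)^2 + (x b)^2) / 2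
        = (∑ a, ∑ b, |E a b| * (x a)^2) / 2 + (∑ a, ∑ b, |E a b| * (x b)^2) / 2 := by
      simp_rw [mul_add, add_div, Finset.sum_add_distrib, Finset.sum_div]
    have step3 : ∑ a, ∑ b, |E a b| * (x a)^2 ≤ 1/20 * ∑ a, (x a)^2 :=
      rowbd x x (fun a => hErow a)
    have step4 : ∑ a, ∑ b, |E a b| * (x b)^2 ≤ 1/20 * ∑ a, (x a)^2 := by
      rw [Finset.sum_comm]
      have hre : ∀ b, ∑ a, |E a b| * (x b)^2 = ∑ a, |E b a| * (x b)^2 := by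
        intro b
        exact Finset.sum_congr rfl fun a _ => by rw [hEsym a b]
      rw [Finset.sum_congr rfl fun b _ => hre b]
      exact rowbd x x (fun a => hErow a)
    rw [step2] at step1
    linarith
  -- positive definite
  have hMpd : M.PosDef := by
    refine Matrix.PosDef.of_dotProduct_mulVec_pos hHM fun x hx => ?_
    have hxP : 0 < ∑ a, (x a)^2 := by
      obtain ⟨a, ha⟩ := Function.ne_iff.mp hx
      exact Finset.sum_pos' (fun i _ => sq_nonneg _) ⟨a, Finset.mem_univ a,
        lt_of_le_of_ne (sq_nonneg _) (Ne.symm (pow_ne_zero 2 ha))⟩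
    have hdot : star x ⬝ᵥ (M *ᵥ x) = ∑ a, (x a)^2 + ∑ a, ∑ b, E a b * x a * x b := by
      have hsx : star x = x := star_trivial x
      have h1 : M *ᵥ x = x + E *ᵥ x := by rw [hME, Matrix.add_mulVec, Matrix.one_mulVec]
      rw [hsx, h1, dotProduct_add]
      congr 1
      · show (∑ a, x a * x a) = ∑ a, (x a)^2
        exact Finset.sum_congr rfl fun a _ => (pow_two (x a)).symm
      · show (∑ a, x a * ∑ b, E a b * x b) = ∑ a, ∑ b, E a b * x a * x b
        refine Finset.sum_congr rfl fun a _ => ?_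
        rw [Finset.mul_sum]
        exact Finset.sum_congr rfl fun b _ => by ring
    rw [hdot]
    have habs := (abs_le.mp (hquad x)).1
    linarith
  have hdet_unit : IsUnit M.det := hMpd.det_pos.ne'.isUnit
  -- eigenvalue facts
  obtain ⟨lam, hlam⟩ : ∃ f : Fin d → ℝ, hHM.eigenvalues = f := ⟨_, rfl⟩
  obtain ⟨U, hU⟩ : ∃ V : Matrix (Fin d) (Fin d) ℝ,
      (hHM.eigenvectorUnitary : Matrix (Fin d) (Fin d) ℝ) = V := ⟨_, rfl⟩
  have hUU : star U * U = 1 := by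
    rw [← hU]; exact Matrix.mem_unitaryGroup_iff'.mp hHM.eigenvectorUnitary.2
  have hspec : M = U * Matrix.diagonal lam * star U := by
    rw [← hU, ← hlam]; exact hHM.spectral_theorem
  obtain ⟨htr, htr2⟩ := trace_eqs hUU hspec
  have hdet_prod : M.det = ∏ k, lam k := by
    rw [← hlam]; exact hHM.det_eq_prod_eigenvalues
  have htrM : Matrix.trace M = d + Matrix.trace E := by
    rw [hME, Matrix.trace_add, Matrix.trace_one]
    simp [Fintype.card_fin]
  have htrE : 0 ≤ Matrix.trace E := by
    rw [Matrix.trace]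
    refine Finset.sum_nonneg fun a _ => ?_
    rw [Matrix.diag_apply, hEapp]
    exact Finset.sum_nonneg fun i _ => DI_diag_nonneg hσ0 hσ1 _ a
  have htrEE_eq : Matrix.trace (E*E) = ∑ a, ∑ b, (E a b)^2 := by
    rw [Matrix.trace]
    refine Finset.sum_congr rfl fun a _ => ?_
    rw [Matrix.diag_apply, Matrix.mul_apply]
    refine Finset.sum_congr rfl fun b _ => ?_
    rw [hEsym b a, sq]
  have htrEE_nonneg : 0 ≤ Matrix.trace (E*E) := by
    rw [htrEE_eq]
    exact Finset.sum_nonneg fun a _ => Finset.sum_nonneg fun b _ => sq_nonneg _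
  have htrEE : Matrix.trace (E*E) ≤ 1/400 := by
    rw [htrEE_eq]
    calc ∑ a, ∑ b, (E a b)^2 ≤ ∑ a, ∑ b, 5 * s * |E a b| := by
          refine Finset.sum_le_sum fun a _ => Finset.sum_le_sum fun b _ => ?_
          have h1 := hEentry a b
          nlinarith [abs_nonneg (E a b), sq_abs (E a b)]
      _ = 5 * s * ∑ a, ∑ b, |E a b| := by rw [Finset.mul_sum]; simp_rw [Finset.mul_sum]
      _ ≤ 5 * s * (20 * s) := by
          have := hEtotal
          nlinarith
      _ ≤ 1/400 := by nlinarith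
  set μ : Fin d → ℝ := fun k => lam k - 1 with hμ
  have hsum_mu : ∑ k, μ k = Matrix.trace E := by
    have h1 : ∑ k, μ k = (∑ k, lam k) - d := by
      simp only [hμ]
      rw [Finset.sum_sub_distrib]
      simp
    rw [h1, ← htr, htrM]; ring
  have hsq_mu : ∑ k, (μ k)^2 = Matrix.trace (E*E) := by
    have h1 : ∀ k, (μ k)^2 = (lam k)^2 - 2 * lam k + 1 := fun k => by rw [hμ]; ring
    have h2 : ∑ k, (μ k)^2 = (∑ k, (lam k)^2) - 2*(∑ k, lam k) + d := by
      rw [Finset.sum_congr rfl fun k _ => h1 k, Finset.sum_add_distrib, Finset.sum_sub_distrib,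
        ← Finset.mul_sum]
      simp
    have hMM : M * M = 1 + E + E + E*E := by rw [hME]; noncomm_ring
    have htrMM : Matrix.trace (M*M) = d + 2*Matrix.trace E + Matrix.trace (E*E) := by
      rw [hMM]
      simp only [Matrix.trace_add, Matrix.trace_one]
      simp [Fintype.card_fin]; ring
    rw [h2, ← htr, ← htr2, htrM, htrMM]; ring
  have hmu_lb : ∀ k, -(1/2) ≤ μ k := by
    intro k
    have h1 : (μ k)^2 ≤ 1/400 := by
      have h2 : ∑ k, (μ k)^2 ≤ 1/400 := by rw [hsq_mu]; exact htrEE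
      exact le_trans (Finset.single_le_sum (fun i _ => sq_nonneg (μ i)) (Finset.mem_univ k)) h2
    nlinarith
  have hdet_lb : 1/2 ≤ M.det := by
    rw [hdet_prod]
    have h1 : ∀ k, Real.exp (μ k - 2*(μ k)^2) ≤ lam k := by
      intro k
      have h2 := exp_quad_le (hmu_lb k)
      have h3 : 1 + μ k = lam k := by rw [hμ]; ring
      rw [h3] at h2
      exact h2
    have hsum_ge : -(1/200) ≤ ∑ k, (μ k - 2*(μ k)^2) := by
      rw [Finset.sum_sub_distrib, ← Finset.mul_sum]
      rw [hsum_mu, hsq_mu]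
      linarith
    calc (1:ℝ)/2 ≤ 1 + (-(1/200)) := by norm_num
      _ ≤ Real.exp (-(1/200)) := by
          have := Real.add_one_le_exp (-(1/200 : ℝ)); linarith
      _ ≤ Real.exp (∑ k, (μ k - 2*(μ k)^2)) := Real.exp_le_exp.mpr hsum_ge
      _ = ∏ k, Real.exp (μ k - 2*(μ k)^2) := by rw [Real.exp_sum]
      _ ≤ ∏ k, lam k := Finset.prod_le_prod (fun k _ => (Real.exp_pos _).le) (fun k _ => h1 k)
  refine ⟨hMpd.isUnit, ?_, hMpd.inv, ?_, ?_⟩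
  · show (M⁻¹)ᵀ = M⁻¹
    rw [← Matrix.conjTranspose_eq_transpose_of_trivial]
    exact hMpd.inv.isHermitian
  · rw [Matrix.det_nonsing_inv, Ring.inverse_eq_inv]
    have h2 : (M.det)⁻¹ ≤ (1/2 : ℝ)⁻¹ := inv_anti₀ (by norm_num) hdet_lb
    norm_num at h2
    exact h2
  · -- entry bound
    set N := M⁻¹ with hN
    have hMN : M * N = 1 := Matrix.mul_nonsing_inv M hdet_unit
    have hNeq : N = 1 - E * N := by
      have h1 : N + E * N = 1 := by
        calc N + E * N = (1 + E) * N := by rw [Matrix.add_mul, Matrix.one_mul]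
          _ = 1 := by rw [← hME]; exact hMN
      exact eq_sub_of_add_eq h1
    have hnonempty : (Finset.univ : Finset (Fin d)).Nonempty :=
      ⟨⟨0, by omega⟩, Finset.mem_univ _⟩
    set f : Fin d → ℝ := fun a => ∑ b, |N a b| with hf
    set c := Finset.univ.sup' hnonempty f with hcdef
    have hfc : ∀ a, f a ≤ c := fun a => Finset.le_sup' f (Finset.mem_univ a)
    obtain ⟨a0, -, hc0⟩ := Finset.exists_mem_eq_sup' hnonempty f
    have hc0' : c = f a0 := by rw [hcdef, hc0]
    have hc_nonneg : 0 ≤ c := by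
      rw [hc0']
      exact Finset.sum_nonneg fun b _ => abs_nonneg _
    have hstep : c ≤ 1 + 1/20 * c := by
      calc c = f a0 := hc0'
        _ ≤ ∑ b, (|(1 : Matrix (Fin d) (Fin d) ℝ) a0 b| + |(E * N) a0 b|) := by
            refine Finset.sum_le_sum fun b _ => ?_
            have h4 : N a0 b = (1 : Matrix (Fin d) (Fin d) ℝ) a0 b - (E*N) a0 b := by
              conv_lhs => rw [hNeq]
              rw [Matrix.sub_apply]
            rw [h4, sub_eq_add_neg]
            exact (abs_add_le _ _).trans (by rw [abs_neg])
        _ = ∑ b, |(1 : Matrix (Fin d) (Fin d) ℝ) a0 b| + ∑ b, |(E*N) a0 b| :=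
            Finset.sum_add_distrib
        _ ≤ 1 + 1/20 * c := by
            have h1 : ∑ b, |(1 : Matrix (Fin d) (Fin d) ℝ) a0 b| = 1 := by
              have h5 : ∀ b, |(1 : Matrix (Fin d) (Fin d) ℝ) a0 b| = if a0 = b then 1 else 0 := by
                intro b; rw [Matrix.one_apply]; split <;> simp
              rw [Finset.sum_congr rfl fun b _ => h5 b, Finset.sum_ite_eq Finset.univ a0
                (fun _ => (1:ℝ)), if_pos (Finset.mem_univ a0)]
            have h2 : ∑ b, |(E*N) a0 b| ≤ 1/20 * c := by
              calc ∑ b, |(E*N) a0 b| ≤ ∑ b, ∑ k, |E a0 k| * |N k b| := by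
                    refine Finset.sum_le_sum fun b _ => ?_
                    rw [Matrix.mul_apply]
                    refine (Finset.abs_sum_le_sum_abs _ _).trans ?_
                    exact Finset.sum_le_sum fun k _ => by rw [abs_mul]
                _ = ∑ k, |E a0 k| * f k := by
                    rw [Finset.sum_comm]
                    exact Finset.sum_congr rfl fun k _ => by rw [hf, Finset.mul_sum]
                _ ≤ ∑ k, |E a0 k| * c :=
                    Finset.sum_le_sum fun k _ => mul_le_mul_of_nonneg_left (hfc k) (abs_nonneg _)
                _ = (∑ k, |E a0 k|) * c := by rw [Finset.sum_mul]
                _ ≤ 1/20 * c := mul_le_mul_of_nonneg_right (hErow a0) hc_nonneg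
            linarith
    have hcle : c ≤ 20/19 := by linarith
    intro a b
    have hfa : f a = ∑ b', |N a b'| := rfl
    have h3 : |N a b| ≤ ∑ b', |N a b'| :=
      Finset.single_le_sum (fun b' _ => abs_nonneg (N a b')) (Finset.mem_univ b)
    have h4 := hfc a
    rw [hfa] at h4
    linarith
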